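/- Let v₁ = (0,0,0), v₂ = (1000,0,0), v₃ = (291,706,0), v₄ = (1046,460,609), v₅ = (804,450,−361), v₆ = (114,519,359), v₇ = (1097,475,180), v₈ = (223,261,−257), v₉ = (867,−122,405), v₁₀ = (771,539,−339) in ℝ³, and define edge vectors eᵢ = v_{i+1} − vᵢ for i = 1, …, 9 and e₁₀ = v₁ − v₁₀. Then there is no w ∈ ℝ³ such that (−1)^{i+1} (w · eᵢ) > 0 for every i ∈ {1, …, 10}. -/

import Mathlib

/-- The vertices of the paper's 10-stick polygonal realization of the knot `9_16`.
Here `vert9_16 i` is the paper's vertex `v_(i+1)`. -/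
noncomputable def vert9_16 : Fin 10 → (Fin 3 → ℝ) :=
  ![![0, 0, 0], ![1000, 0, 0], ![291, 706, 0], ![1046, 460, 609], ![804, 450, -361], ![114, 519, 359], ![1097, 475, 180], ![223, 261, -257], ![867, -122, 405], ![771, 539, -339]]

/-- The edge vectors `eᵢ = v_(i+1) − vᵢ` (cyclically, so `e₁₀ = v₁ − v₁₀`);
here `edge9_16 i` is the paper's `e_(i+1)`, using wrap-around addition on `Fin 10`. -/
noncomputable def edge9_16 (i : Fin 10) : Fin 3 → ℝ :=
  vert9_16 (i + 1) - vert9_16 i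

/-!
Easy half of Gordan's alternative: if a nonnegative, nonzero combination of the signed edges
`(-1)^i eᵢ` vanishes, then no linear functional is positive on all of them. Four signed edges
of this polygon already admit such a dependency.
-/

theorem not_forall_pos_of_sum_smul_eq_zero {𝕜 E ι : Type*} [CommRing 𝕜] [PartialOrder 𝕜]
    [IsStrictOrderedRing 𝕜] [AddCommGroup E] [Module 𝕜 E] [Fintype ι]
    (f : E →ₗ[𝕜] 𝕜) (u : ι → E) (c : ι → 𝕜) (hc : ∀ i, 0 ≤ c i) (hc' : ∃ i, 0 < c i)
    (hu : ∑ i, c i • u i = 0) : ¬ ∀ i, 0 < f (u i) := by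
  intro hf
  have hpos : 0 < ∑ i, c i * f (u i) :=
    Finset.sum_pos' (fun i _ => mul_nonneg (hc i) (hf i).le)
      (hc'.imp fun i hi => ⟨Finset.mem_univ i, mul_pos hi (hf i)⟩)
  have hzero : ∑ i, c i * f (u i) = 0 := by
    simp_rw [← smul_eq_mul, ← map_smul, ← map_sum, hu, map_zero]
  exact hpos.ne' hzero

/-- The weights on the signed edges with indices `0, 4, 6, 7` are the (scaled) cofactors of the
`3 × 4` matrix with these columns, so they span its kernel. -/
def dependencyWeights9_16 : Fin 10 → ℝ :=
  ![19132757, 0, 0, 0, 10301300, 0, 10714600, 4130900, 0, 0]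

theorem sum_dependencyWeights9_16_smul_signed_edge :
    ∑ i, dependencyWeights9_16 i • ((-1 : ℝ) ^ (i : ℕ) • edge9_16 i) = 0 := by
  ext j
  fin_cases j <;>
    simp [Fin.sum_univ_succ, dependencyWeights9_16, edge9_16, vert9_16] <;> norm_num

/-- There is no `w ∈ ℝ³` such that `(−1)^(i+1) (w · eᵢ) > 0` for every
`i ∈ {1, …, 10}`: no projection of this polygon (the knot `9_16`) to a line has
5 local maxima. (With 0-based indexing `i : Fin 10`, the sign is `(−1)^i`.) -/
theorem no_alternating_direction_9_16 :
    ¬ ∃ w : Fin 3 → ℝ, ∀ i : Fin 10,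
        0 < (-1 : ℝ) ^ (i : ℕ) * ∑ j : Fin 3, w j * edge9_16 i j := by
  rintro ⟨w, hw⟩
  refine not_forall_pos_of_sum_smul_eq_zero (dotProductBilin ℝ ℝ w) _ dependencyWeights9_16
    (by simp [dependencyWeights9_16, Fin.forall_fin_succ])
    ⟨0, by norm_num [dependencyWeights9_16]⟩ sum_dependencyWeights9_16_smul_signed_edge
    fun i => ?_
  simpa [dotProduct, Finset.mul_sum, mul_left_comm] using hw i
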